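/- Let H be a positive self-adjoint bounded operator on a Hilbert space with spectrum contained in [c, ∞) for some c > 0, and let α be a real number with α > 0. Then the Bochner integral ∫₀^∞ e^{-tH} t^{α−1}/Γ(α) dt converges in operator norm and equals H^{−α} (the inverse of H raised to the power α via continuous functional calculus). -/

import Mathlib

open MeasureTheory Real

set_option maxHeartbeats 2000000 in
/-- for a positive self-adjoint bounded operator `T` with spectrum in `[c,∞)`,
`c > 0`, and `α > 0`, the Bochner integral `∫₀^∞ (t^{α−1}/Γ(α)) e^{-tT} dt` converges in
operator norm and equals `T^{−α}` defined via the continuous functional calculus. -/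
theorem stmt7 {ℋ : Type*} [NormedAddCommGroup ℋ] [InnerProductSpace ℂ ℋ] [CompleteSpace ℋ]
    (T : ℋ →L[ℂ] ℋ) (hT : IsSelfAdjoint T)
    (c : ℝ) (hc : 0 < c) (hspec : spectrum ℝ T ⊆ Set.Ici c)
    (α : ℝ) (hα : 0 < α) :
    IntegrableOn (fun t : ℝ => (t ^ (α - 1) / Real.Gamma α) • NormedSpace.exp ((-t) • T))
        (Set.Ioi 0)
      ∧ ∫ t in Set.Ioi (0 : ℝ),
            (t ^ (α - 1) / Real.Gamma α) • NormedSpace.exp ((-t) • T)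
          = cfc (fun x : ℝ => x ^ (-α)) T := by
  have hΓ : 0 < Real.Gamma α := Real.Gamma_pos_of_pos hα
  have hcont : Continuous (fun p : ℝ × spectrum ℝ T => Real.exp (-p.1 * (p.2 : ℝ))) := by
    fun_prop
  let ec : C(ℝ, C(spectrum ℝ T, ℝ)) := ContinuousMap.curry ⟨_, hcont⟩
  let fc : ℝ → C(spectrum ℝ T, ℝ) := fun t => (t ^ (α - 1) / Real.Gamma α) • ec t
  -- integrable bound
  have hbound : IntegrableOn (fun t : ℝ => t ^ (α - 1) * Real.exp (-c * t)) (Set.Ioi 0) := by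
    have h := integrableOn_rpow_mul_exp_neg_mul_rpow (p := 1) (s := α - 1) (b := c)
      (by linarith) zero_lt_one hc
    exact h.congr_fun (fun t ht => by simp only [Real.rpow_one]) measurableSet_Ioi
  have hfc_cont : ContinuousOn fc (Set.Ioi 0) := by
    refine ContinuousOn.smul (f := fun t : ℝ => t ^ (α - 1) / Real.Gamma α) (g := fun t => ec t) ?_ ?_
    · exact fun t ht =>
        ((Real.continuousAt_rpow_const t (α - 1) (Or.inl (ne_of_gt ht))).div_const
          _).continuousWithinAt
    · exact ec.continuous.continuousOn
  have hfc_norm : ∀ t ∈ Set.Ioi (0 : ℝ),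
      ‖fc t‖ ≤ (Real.Gamma α)⁻¹ * (t ^ (α - 1) * Real.exp (-c * t)) := by
    intro t ht
    have ht' : (0 : ℝ) < t := ht
    rw [ContinuousMap.norm_le _ (by positivity)]
    intro x
    have hx : c ≤ (x : ℝ) := hspec x.2
    have hev : (fc t) x = t ^ (α - 1) / Real.Gamma α * Real.exp (-t * (x : ℝ)) := rfl
    rw [hev, Real.norm_eq_abs, abs_of_nonneg (by positivity)]
    have hle : Real.exp (-t * (x : ℝ)) ≤ Real.exp (-c * t) :=
      Real.exp_le_exp.mpr (by nlinarith)
    have h0 : (0:ℝ) ≤ t ^ (α - 1) / Real.Gamma α := by positivity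
    calc t ^ (α - 1) / Real.Gamma α * Real.exp (-t * (x : ℝ))
        ≤ t ^ (α - 1) / Real.Gamma α * Real.exp (-c * t) :=
          mul_le_mul_of_nonneg_left hle h0
      _ = (Real.Gamma α)⁻¹ * (t ^ (α - 1) * Real.exp (-c * t)) := by ring
  have hfc_int : Integrable fc (volume.restrict (Set.Ioi 0)) := by
    refine Integrable.mono'
      (g := fun t => (Real.Gamma α)⁻¹ * (t ^ (α - 1) * Real.exp (-c * t)))
      (hbound.const_mul _) (hfc_cont.aestronglyMeasurable measurableSet_Ioi) ?_
    filter_upwards [ae_restrict_mem measurableSet_Ioi] with t ht using hfc_norm t ht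
  -- the exponential as a cfc
  have hexp : ∀ t : ℝ, NormedSpace.exp ((-t) • T) = cfcHom (R := ℝ) hT (ec t) := by
    intro t
    have hsa : IsSelfAdjoint ((-t) • T) := by
      rw [isSelfAdjoint_iff, star_smul, star_trivial, hT.star_eq]
    have hct : ContinuousOn (fun x : ℝ => Real.exp (-t * x)) (spectrum ℝ T) :=
      (Real.continuous_exp.comp (continuous_const.mul continuous_id)).continuousOn
    calc NormedSpace.exp ((-t) • T) = NormedSpace.exp ((-t) • T) := by
          rfl
      _ = cfc Real.exp ((-t) • T) := (CFC.real_exp_eq_normedSpace_exp hsa).symm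
      _ = cfc (fun x : ℝ => Real.exp (-t * x)) T :=
          (cfc_comp_const_mul (-t) Real.exp T (by fun_prop) hT).symm
      _ = cfcHom (R := ℝ) hT (ec t) := by
          rw [cfc_apply (fun x : ℝ => Real.exp (-t * x)) T hT hct]
          congr 1
  have hg : ∀ t : ℝ,
      (t ^ (α - 1) / Real.Gamma α) • NormedSpace.exp ((-t) • T)
        = cfcL (a := T) (R := ℝ) hT (fc t) := by
    intro t
    rw [hexp t]
    exact (_root_.map_smul (cfcL (a := T) (R := ℝ) hT)
      (t ^ (α - 1) / Real.Gamma α) (ec t)).symm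
  have hInt : IntegrableOn
      (fun t : ℝ => (t ^ (α - 1) / Real.Gamma α) • NormedSpace.exp ((-t) • T))
      (Set.Ioi 0) := by
    have h := (cfcL (a := T) (R := ℝ) hT).integrable_comp hfc_int
    exact h.congr (ae_of_all _ fun t => (hg t).symm)
  refine ⟨hInt, ?_⟩
  have hcontα : ContinuousOn (fun x : ℝ => x ^ (-α)) (spectrum ℝ T) := fun x hx =>
    (Real.continuousAt_rpow_const x (-α)
      (Or.inl (ne_of_gt (lt_of_lt_of_le hc (hspec hx))))).continuousWithinAt
  have hIfc : (∫ t in Set.Ioi (0 : ℝ), fc t)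
      = ⟨_, hcontα.restrict⟩ := by
    ext x
    rw [ContinuousMap.integral_apply hfc_int]
    have hx0 : (0 : ℝ) < x := lt_of_lt_of_le hc (hspec x.2)
    have hrw : ∀ t : ℝ, (fc t) x
        = (Real.Gamma α)⁻¹ * (t ^ (α - 1) * Real.exp (-((x : ℝ) * t))) := by
      intro t
      have : (fc t) x = t ^ (α - 1) / Real.Gamma α * Real.exp (-t * (x : ℝ)) := rfl
      rw [this, mul_comm (x : ℝ) t, neg_mul]
      ring
    simp_rw [hrw]
    rw [integral_const_mul, Real.integral_rpow_mul_exp_neg_mul_Ioi hα hx0]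
    have : ((1 : ℝ) / (x : ℝ)) ^ α = (x : ℝ) ^ (-α) := by
      rw [one_div, Real.inv_rpow hx0.le, ← Real.rpow_neg hx0.le]
    rw [this]
    field_simp
    rfl
  calc (∫ t in Set.Ioi (0 : ℝ),
        (t ^ (α - 1) / Real.Gamma α) • NormedSpace.exp ((-t) • T))
      = ∫ t in Set.Ioi (0 : ℝ), cfcL (a := T) (R := ℝ) hT (fc t) := by simp_rw [hg]
    _ = cfcL (a := T) (R := ℝ) hT (∫ t in Set.Ioi (0 : ℝ), fc t) :=
        cfcL_integral T fc hfc_int hT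
    _ = cfc (fun x : ℝ => x ^ (-α)) T := by
        rw [hIfc, ← cfc_eq_cfcL hT hcontα]
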